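/- arXiv:2303.09994 — 3 statements merged into one kernel-verified Lean document; each statement's English description precedes it below -/
import Mathlib

section
/- Let n ≥ 1, let E : [0, ∞) → ℝⁿ be differentiable, suppose there exists B ≥ 0 with ‖E′(t)‖ ≤ B for all t ≥ 0, and suppose ∫_0^∞ ‖E(t)‖² dt < ∞. Then E(t) → 0 as t → ∞. -/
/-!
If `‖f‖ ^ p` is integrable on `[a, ∞)`, its integrals over windows `[t, t + δ]` of fixed length
tend to `0`. If `‖f t‖ ≥ ε` at arbitrarily large `t`, the `K`-Lipschitz bound keeps `‖f‖ ≥ ε / 2`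
on the window of length `δ = ε / (2 (K + 1))` starting at `t`, so these window integrals stay
above `(ε / 2) ^ p * δ > 0`, a contradiction.
-/

open MeasureTheory Filter Set Topology NNReal

section

variable {E : Type*} [NormedAddCommGroup E] {μ : Measure ℝ}

theorem MeasureTheory.IntegrableOn.intervalIntegrable_of_Ioi {g : ℝ → E} {a b c : ℝ}
    (hg : IntegrableOn g (Ioi a) μ) (hb : a ≤ b) (hc : a ≤ c) : IntervalIntegrable g μ b c :=
  intervalIntegrable_iff.2 <| hg.mono_set fun _ hx => (le_min hb hc).trans_lt hx.1

variable [NormedSpace ℝ E]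

theorem MeasureTheory.IntegrableOn.tendsto_intervalIntegral_add_const {g : ℝ → E} {a : ℝ}
    (hg : IntegrableOn g (Ioi a) μ) (δ : ℝ) :
    Tendsto (fun t => ∫ x in t..t + δ, g x ∂μ) atTop (𝓝 0) := by
  have hlim := (intervalIntegral_tendsto_integral_Ioi a hg
    (tendsto_atTop_add_const_right _ δ tendsto_id)).sub
    (intervalIntegral_tendsto_integral_Ioi a hg tendsto_id)
  rw [sub_self] at hlim
  refine hlim.congr' ?_
  filter_upwards [eventually_ge_atTop a, eventually_ge_atTop (a - δ)] with t ht htδ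
  exact intervalIntegral.integral_interval_sub_left
    (hg.intervalIntegrable_of_Ioi le_rfl (show a ≤ t + δ by linarith)) (hg.intervalIntegrable_of_Ioi le_rfl ht)

end

section

variable {F : Type*} [SeminormedAddCommGroup F] {f : ℝ → F} {K : ℝ≥0} {a : ℝ}

theorem LipschitzOnWith.pow_mul_le_intervalIntegral_norm_pow {t δ r : ℝ} {p : ℕ}
    (hf : LipschitzOnWith K f (Ici a))
    (hint : IntervalIntegrable (fun x => ‖f x‖ ^ p) volume t (t + δ))
    (ht : a ≤ t) (hδ : 0 ≤ δ) (hr : 0 ≤ r) (hfar : K * δ + r ≤ ‖f t‖) :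
    r ^ p * δ ≤ ∫ x in t..t + δ, ‖f x‖ ^ p := by
  have hwindow : ∀ x ∈ Icc t (t + δ), r ^ p ≤ ‖f x‖ ^ p := by
    rintro x ⟨htx, hxδ⟩
    have hdist : dist (f t) (f x) ≤ K * dist t x := hf.dist_le_mul t ht x (ht.trans htx)
    rw [dist_eq_norm, Real.dist_eq, abs_sub_comm, abs_of_nonneg (sub_nonneg.2 htx)] at hdist
    have hKx : (K : ℝ) * (x - t) ≤ K * δ := by gcongr; linarith
    have := norm_sub_norm_le (f t) (f x)
    exact pow_le_pow_left₀ hr (by linarith) p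
  calc r ^ p * δ = ∫ _ in t..t + δ, r ^ p := by simp [mul_comm]
    _ ≤ ∫ x in t..t + δ, ‖f x‖ ^ p :=
      intervalIntegral.integral_mono_on (by linarith) intervalIntegrable_const hint hwindow

theorem LipschitzOnWith.tendsto_zero_of_integrableOn_norm_pow {p : ℕ}
    (hf : LipschitzOnWith K f (Ici a)) (hfp : IntegrableOn (fun t => ‖f t‖ ^ p) (Ioi a)) :
    Tendsto f atTop (𝓝 0) := by
  refine Metric.tendsto_nhds.2 fun ε hε => ?_
  simp_rw [dist_zero_right]
  by_contra! hnot
  set δ := ε / (2 * (K + 1)) with hδ_def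
  have hδ : 0 < δ := by positivity
  have hKδ : K * δ ≤ ε / 2 := by
    rw [hδ_def, mul_div_assoc', div_le_div_iff₀ (by positivity) two_pos]
    nlinarith [K.coe_nonneg]
  have hpos : 0 < (ε / 2) ^ p * δ := by positivity
  obtain ⟨t, hfar, hsmall, ht⟩ := (hnot.and_eventually
    (((hfp.tendsto_intervalIntegral_add_const δ).eventually (gt_mem_nhds hpos)).and
      (eventually_ge_atTop a))).exists
  have hbig := hf.pow_mul_le_intervalIntegral_norm_pow
    (hfp.intervalIntegrable_of_Ioi ht (by linarith)) ht hδ.le (by positivity)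
    (by linarith : K * δ + ε / 2 ≤ ‖f t‖)
  exact hbig.not_gt hsmall

end

theorem stmt_10_general (n : ℕ)
    (E E' : ℝ → EuclideanSpace ℝ (Fin n))
    (hderiv : ∀ t ∈ Set.Ici (0 : ℝ), HasDerivAt E (E' t) t)
    (B : ℝ)
    (hbound : ∀ t ∈ Set.Ici (0 : ℝ), ‖E' t‖ ≤ B)
    (hL2 : IntegrableOn (fun t : ℝ => ‖E t‖ ^ 2) (Set.Ici 0)) :
    Tendsto E atTop (nhds 0) := by
  have hlip : LipschitzOnWith B.toNNReal E (Ici 0) :=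
    (convex_Ici 0).lipschitzOnWith_of_nnnorm_hasDerivWithin_le
      (fun t ht => (hderiv t ht).hasDerivWithinAt)
      (fun t ht => by
        rw [← NNReal.coe_le_coe, coe_nnnorm]
        exact (hbound t ht).trans (Real.le_coe_toNNReal B))
  exact hlip.tendsto_zero_of_integrableOn_norm_pow (hL2.mono_set Ioi_subset_Ici_self)

/-- If `E : [0,∞) → ℝⁿ` is differentiable with uniformly bounded derivative
and is square-integrable on `[0,∞)`, then `E(t) → 0` as `t → ∞` (Barbalat-type lemma). -/
theorem stmt_10 (n : ℕ) (hn : 1 ≤ n)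
    (E E' : ℝ → EuclideanSpace ℝ (Fin n))
    (hderiv : ∀ t ∈ Set.Ici (0 : ℝ), HasDerivAt E (E' t) t)
    (B : ℝ) (hB : 0 ≤ B)
    (hbound : ∀ t ∈ Set.Ici (0 : ℝ), ‖E' t‖ ≤ B)
    (hL2 : IntegrableOn (fun t : ℝ => ‖E t‖ ^ 2) (Set.Ici 0)) :
    Tendsto E atTop (nhds 0) :=
  stmt_10_general n E E' hderiv B hbound hL2
end

section
/- Let Δ > 0, let U : ℝ → ℝ be integrable on every compact interval with U(τ) ≥ 0 for all τ, and let (V^r)_{r∈ℕ} be a sequence of functions V^r : ℝ → ℝ satisfying V^{r+1}(t) = ∫_t^{t+Δ} U(τ) dτ + V^r(t + Δ) for all r ∈ ℕ and all t ∈ ℝ. Suppose the initial function satisfies V^0(t) ≤ ∫_t^{t+Δ} U(τ) dτ + V^0(t + Δ) for all t ∈ ℝ. Then for every r ∈ ℕ and every t ∈ ℝ, V^r(t) ≤ V^{r+1}(t); i.e., the value-iteration sequence is pointwise nondecreasing. -/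
open MeasureTheory

theorem le_succ_of_eq_map_of_le_map {α : Type*} [Preorder α] {T : α → α} (hT : Monotone T)
    {V : ℕ → α} (hrec : ∀ r, V (r + 1) = T (V r)) (h0 : V 0 ≤ T (V 0)) :
    ∀ r, V r ≤ V (r + 1) := by
  intro r
  induction r with
  | zero => rwa [hrec 0]
  | succ n ih => rw [hrec n, hrec (n + 1)]; exact hT ih

theorem stmt_13_general (Δ : ℝ)
    (U : ℝ → ℝ)
    (V : ℕ → ℝ → ℝ)
    (hrec : ∀ r : ℕ, ∀ t : ℝ,
      V (r + 1) t = (∫ τ in t..(t + Δ), U τ) + V r (t + Δ))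
    (hsub : ∀ t : ℝ, V 0 t ≤ (∫ τ in t..(t + Δ), U τ) + V 0 (t + Δ)) :
    ∀ r : ℕ, ∀ t : ℝ, V r t ≤ V (r + 1) t := by
  let bellman : (ℝ → ℝ) → ℝ → ℝ := fun W t => (∫ τ in t..(t + Δ), U τ) + W (t + Δ)
  have bellman_mono : Monotone bellman := fun W W' hW t => add_le_add_right (hW (t + Δ)) _
  exact le_succ_of_eq_map_of_le_map bellman_mono (fun r => funext (hrec r)) hsub

/-- If the value-iteration sequence satisfies
`V^{r+1}(t) = ∫_t^{t+Δ} U(τ) dτ + V^r(t+Δ)` with nonnegative running cost `U`, and the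
initial function is a subsolution, `V^0(t) ≤ ∫_t^{t+Δ} U(τ) dτ + V^0(t+Δ)`, then the
sequence is pointwise nondecreasing: `V^r(t) ≤ V^{r+1}(t)` for all `r` and `t`. -/
theorem stmt_13 (Δ : ℝ) (hΔ : 0 < Δ)
    (U : ℝ → ℝ) (hU : ∀ a b : ℝ, IntegrableOn U (Set.Icc a b))
    (hUnonneg : ∀ τ : ℝ, 0 ≤ U τ)
    (V : ℕ → ℝ → ℝ)
    (hrec : ∀ r : ℕ, ∀ t : ℝ,
      V (r + 1) t = (∫ τ in t..(t + Δ), U τ) + V r (t + Δ))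
    (hsub : ∀ t : ℝ, V 0 t ≤ (∫ τ in t..(t + Δ), U τ) + V 0 (t + Δ)) :
    ∀ r : ℕ, ∀ t : ℝ, V r t ≤ V (r + 1) t :=
  stmt_13_general Δ U V hrec hsub
end

section
/- Let Δ > 0, let U : ℝ → ℝ be integrable on every compact interval with U(τ) ≥ 0 for all τ and ∫_t^∞ U(τ) dτ ≤ 𝒰 for all t ∈ ℝ (for some constant 𝒰 ≥ 0), and let (V^r)_{r∈ℕ} be a sequence of functions V^r : ℝ → ℝ satisfying V^{r+1}(t) = ∫_t^{t+Δ} U(τ) dτ + V^r(t + Δ) for all r ∈ ℕ and all t ∈ ℝ. Suppose 0 ≤ V^0(t) ≤ M for all t ∈ ℝ (for some constant M ≥ 0) and V^0(t) ≤ ∫_t^{t+Δ} U(τ) dτ + V^0(t + Δ) for all t ∈ ℝ. Then for every t ∈ ℝ the sequence (V^r(t))_{r∈ℕ} converges to a limit V*(t) satisfying V^0(t) ≤ V*(t) ≤ M + 𝒰. -/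
open MeasureTheory Filter

/-!
Because `V⁰` is a subsolution, the iterates increase pointwise. Unrolling the recursion `r` times
gives `V^r(t) = ∫_t^{t+rΔ} U + V⁰(t + rΔ) ≤ 𝒰 + M`, so for each `t` the sequence is monotone and
bounded above and converges to its supremum.
-/

section

variable {U : ℝ → ℝ}

theorem intervalIntegrable_of_integrableOn_Ici (hU : ∀ t, IntegrableOn U (Set.Ici t)) (a b : ℝ) :
    IntervalIntegrable U volume a b := by
  rw [intervalIntegrable_iff]
  exact (hU (min a b)).mono_set fun τ hτ => le_of_lt hτ.1

theorem intervalIntegral_le_setIntegral_Ici {a : ℝ} (hU : IntegrableOn U (Set.Ici a))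
    (hU_nonneg : ∀ τ, 0 ≤ U τ) (b : ℝ) :
    (∫ τ in a..b, U τ) ≤ ∫ τ in Set.Ici a, U τ := by
  rcases le_total a b with hab | hba
  · rw [intervalIntegral.integral_of_le hab]
    exact setIntegral_mono_set hU (.of_forall fun τ => hU_nonneg τ)
      (.of_forall fun τ hτ => le_of_lt hτ.1)
  · calc (∫ τ in a..b, U τ) ≤ 0 := by
          rw [intervalIntegral.integral_symm]
          exact neg_nonpos.2 (intervalIntegral.integral_nonneg_of_forall hba hU_nonneg)
      _ ≤ ∫ τ in Set.Ici a, U τ := setIntegral_nonneg measurableSet_Ici fun τ _ => hU_nonneg τ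

end

section ValueIteration

variable {Δ : ℝ} {V : ℕ → ℝ → ℝ}

theorem valueIteration_le_succ (c : ℝ → ℝ) (hrec : ∀ r t, V (r + 1) t = c t + V r (t + Δ))
    (hsub : ∀ t, V 0 t ≤ c t + V 0 (t + Δ)) (r : ℕ) (t : ℝ) : V r t ≤ V (r + 1) t := by
  induction r generalizing t with
  | zero => exact (hrec 0 t).symm ▸ hsub t
  | succ n ih =>
    rw [hrec n t, hrec (n + 1) t]
    exact add_le_add_right (ih (t + Δ)) _

theorem valueIteration_le_integral_add {U : ℝ → ℝ} {M : ℝ}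
    (hU : ∀ a b, IntervalIntegrable U volume a b)
    (hrec : ∀ r t, V (r + 1) t = (∫ τ in t..(t + Δ), U τ) + V r (t + Δ))
    (hV0 : ∀ t, V 0 t ≤ M) (r : ℕ) (t : ℝ) :
    V r t ≤ (∫ τ in t..(t + r * Δ), U τ) + M := by
  induction r generalizing t with
  | zero => simpa using hV0 t
  | succ n ih =>
    have hsplit : (∫ τ in t..(t + Δ), U τ) + (∫ τ in (t + Δ)..(t + Δ + n * Δ), U τ)
        = ∫ τ in t..(t + (n + 1 : ℕ) * Δ), U τ := by
      rw [show t + (n + 1 : ℕ) * Δ = t + Δ + n * Δ by push_cast; ring]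
      exact intervalIntegral.integral_add_adjacent_intervals (hU _ _) (hU _ _)
    rw [hrec n t, ← hsplit]
    linarith [ih (t + Δ)]

end ValueIteration

theorem stmt_15_general (Δ : ℝ)
    (U : ℝ → ℝ)
    (hUnonneg : ∀ τ : ℝ, 0 ≤ U τ)
    (𝒰 : ℝ)
    (hUint : ∀ t : ℝ, IntegrableOn U (Set.Ici t))
    (htail : ∀ t : ℝ, (∫ τ in Set.Ici t, U τ) ≤ 𝒰)
    (V : ℕ → ℝ → ℝ)
    (hrec : ∀ r : ℕ, ∀ t : ℝ,
      V (r + 1) t = (∫ τ in t..(t + Δ), U τ) + V r (t + Δ))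
    (M : ℝ)
    (hV0 : ∀ t : ℝ, 0 ≤ V 0 t ∧ V 0 t ≤ M)
    (hsub : ∀ t : ℝ, V 0 t ≤ (∫ τ in t..(t + Δ), U τ) + V 0 (t + Δ)) :
    ∀ t : ℝ, ∃ Vstar : ℝ,
      Tendsto (fun r : ℕ => V r t) atTop (nhds Vstar) ∧
      V 0 t ≤ Vstar ∧ Vstar ≤ M + 𝒰 := by
  intro t
  have hmono : Monotone fun r => V r t := monotone_nat_of_le_succ fun r =>
    valueIteration_le_succ (fun t => ∫ τ in t..(t + Δ), U τ) hrec hsub r t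
  have hbound : ∀ r, V r t ≤ M + 𝒰 := fun r => by
    linarith [valueIteration_le_integral_add (intervalIntegrable_of_integrableOn_Ici hUint) hrec
      (fun t => (hV0 t).2) r t,
      intervalIntegral_le_setIntegral_Ici (hUint t) hUnonneg (t + r * Δ), htail t]
  have hbdd : BddAbove (Set.range fun r => V r t) := ⟨M + 𝒰, by rintro _ ⟨r, rfl⟩; exact hbound r⟩
  exact ⟨⨆ r, V r t, tendsto_atTop_ciSup hmono hbdd, le_ciSup hbdd 0, ciSup_le hbound⟩

/-- Under the value-iteration recursion
`V^{r+1}(t) = ∫_t^{t+Δ} U(τ) dτ + V^r(t+Δ)` with nonnegative running cost `U` whose tail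
integrals are bounded by `𝒰`, if `0 ≤ V^0 ≤ M` and `V^0` is a subsolution of the integral
Bellman equation, then for every `t` the sequence `(V^r(t))_r` converges to a limit
`V*(t)` with `V^0(t) ≤ V*(t) ≤ M + 𝒰`. -/
theorem stmt_15 (Δ : ℝ) (hΔ : 0 < Δ)
    (U : ℝ → ℝ) (hU : ∀ a b : ℝ, IntegrableOn U (Set.Icc a b))
    (hUnonneg : ∀ τ : ℝ, 0 ≤ U τ)
    (𝒰 : ℝ) (h𝒰 : 0 ≤ 𝒰)
    (hUint : ∀ t : ℝ, IntegrableOn U (Set.Ici t))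
    (htail : ∀ t : ℝ, (∫ τ in Set.Ici t, U τ) ≤ 𝒰)
    (V : ℕ → ℝ → ℝ)
    (hrec : ∀ r : ℕ, ∀ t : ℝ,
      V (r + 1) t = (∫ τ in t..(t + Δ), U τ) + V r (t + Δ))
    (M : ℝ) (hM : 0 ≤ M)
    (hV0 : ∀ t : ℝ, 0 ≤ V 0 t ∧ V 0 t ≤ M)
    (hsub : ∀ t : ℝ, V 0 t ≤ (∫ τ in t..(t + Δ), U τ) + V 0 (t + Δ)) :
    ∀ t : ℝ, ∃ Vstar : ℝ,
      Tendsto (fun r : ℕ => V r t) atTop (nhds Vstar) ∧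
      V 0 t ≤ Vstar ∧ Vstar ≤ M + 𝒰 :=
  stmt_15_general Δ U hUnonneg 𝒰 hUint htail V hrec M hV0 hsub
end
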